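/- Let A, B ∈ B(H) with AB = BA, where A is an isometry, and let α, β ≥ 0 with (α,β) ≠ (0,0). Then ‖AB‖_{α,β} ≤ √( α/(α+β) + 1 ) · ‖B‖_{α,β}. -/

import Mathlib

open ContinuousLinearMap

variable {H : Type*} [NormedAddCommGroup H] [InnerProductSpace ℂ H] [CompleteSpace H]

/-- The numerical radius `w(T) = sup {|⟨Tx,x⟩| : ‖x‖ = 1}`. -/
noncomputable def numRad (T : H →L[ℂ] H) : ℝ :=
  sSup {r : ℝ | ∃ x : H, ‖x‖ = 1 ∧ r = ‖(inner ℂ (T x) x : ℂ)‖}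

/-- The `(α,β)`-norm `‖T‖_{α,β} = sup {√(α|⟨Tx,x⟩|² + β‖Tx‖²) : ‖x‖ = 1}`. -/
noncomputable def abNorm (α β : ℝ) (T : H →L[ℂ] H) : ℝ :=
  sSup {r : ℝ | ∃ x : H, ‖x‖ = 1 ∧
    r = Real.sqrt (α * ‖(inner ℂ (T x) x : ℂ)‖ ^ 2 + β * ‖T x‖ ^ 2)}

/-!
The core is Bouldin's inequality `w(AB) ≤ w(B)`. Fix `x`, `n`, a primitive `(n+2)`-th root of
unity `ζ`, and put `z_r = ∑_{k ≤ n} ζ^{rk} A^k x`. Orthogonality of the powers of `ζ`, together with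
`⟪A^k u, A^k v⟫ = ⟪u, v⟫` and `B A^k = A^k B`, gives
`∑_r ζ^r ⟪B z_r, z_r⟫ = (n+2) n ⟪ABx, x⟫` and `∑_r ‖z_r‖² = (n+2)(n+1) ‖x‖²`,
so `n |⟪ABx, x⟫| ≤ (n+1) w(B) ‖x‖²`; let `n → ∞`.

Since `|⟪Bx, x⟫| ≤ ‖Bx‖` on unit vectors, `(α+β) w(B)² ≤ ‖B‖²_{α,β}`. With `‖ABx‖ = ‖Bx‖` this
yields `α |⟪ABx, x⟫|² + β ‖ABx‖² ≤ α w(B)² + β ‖Bx‖² ≤ (α/(α+β) + 1) ‖B‖²_{α,β}`.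
-/

open Finset ComplexConjugate
open scoped InnerProductSpace

theorem IsPrimitiveRoot.sum_zpow_pow_eq_ite {K : Type*} [Field K] {ζ : K} {M : ℕ}
    (hζ : IsPrimitiveRoot ζ M) (m : ℤ) :
    ∑ r ∈ range M, (ζ ^ m) ^ r = if (M : ℤ) ∣ m then (M : K) else 0 := by
  split_ifs with h
  · simp [(hζ.zpow_eq_one_iff_dvd m).mpr h]
  · have hne : ζ ^ m ≠ 1 := mt (hζ.zpow_eq_one_iff_dvd m).mp h
    have hpow : (ζ ^ m) ^ M = 1 := by
      rw [← zpow_natCast, ← zpow_mul, mul_comm, zpow_mul, hζ.zpow_eq_one, one_zpow]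
    rw [geom_sum_eq hne, hpow, sub_self, zero_div]

theorem le_of_forall_nat_mul_le_succ_mul {K : Type*} [Field K] [LinearOrder K]
    [IsStrictOrderedRing K] [Archimedean K] {a b : K} (h : ∀ n : ℕ, n * a ≤ (n + 1) * b) :
    a ≤ b := by
  by_contra! hlt
  obtain ⟨n, hn⟩ := exists_nat_gt (b / (a - b))
  rw [div_lt_iff₀ (sub_pos.mpr hlt)] at hn
  nlinarith [h n]

theorem IsPrimitiveRoot.sum_pow_mul_inner_sum_smul {E : Type*} [NormedAddCommGroup E]
    [InnerProductSpace ℂ E] {ζ : ℂ} {M N j : ℕ} (hζ : IsPrimitiveRoot ζ M) (hNM : N + j ≤ M)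
    (u v : ℕ → E) :
    ∑ r ∈ range M, ζ ^ (r * j) *
        ⟪∑ k ∈ range N, ζ ^ (r * k) • u k, ∑ l ∈ range N, ζ ^ (r * l) • v l⟫_ℂ =
      M * ∑ l ∈ range (N - j), ⟪u (l + j), v l⟫_ℂ := by
  rcases Nat.eq_zero_or_pos M with rfl | hM
  · obtain ⟨rfl, rfl⟩ : N = 0 ∧ j = 0 := by omega
    simp
  have hconj : conj ζ = ζ⁻¹ := (Complex.inv_eq_conj (hζ.norm'_eq_one hM.ne')).symm
  have hcoef : ∀ r k l : ℕ, ζ ^ (r * j) * (conj (ζ ^ (r * k)) * ζ ^ (r * l)) =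
      (ζ ^ ((l : ℤ) + j - k)) ^ r := by
    intro r k l
    have hζ0 : ζ ≠ 0 := hζ.ne_zero hM.ne'
    rw [map_pow, hconj, inv_pow, ← zpow_natCast (ζ ^ _) r, ← zpow_mul,
      show ((l : ℤ) + j - k) * r = r * j + r * l - r * k by ring, zpow_sub₀ hζ0, zpow_add₀ hζ0]
    simp only [← Nat.cast_mul, zpow_natCast]
    field_simp
  have hdvd : ∀ k ∈ range N, ∀ l ∈ range N, (M : ℤ) ∣ (l : ℤ) + j - k ↔ k = l + j := by
    intro k hk l hl
    rw [mem_range] at hk hl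
    constructor
    · intro hd
      have := Int.eq_zero_of_abs_lt_dvd hd (by rw [abs_lt]; omega)
      omega
    · intro he
      subst he
      simp
  calc ∑ r ∈ range M, ζ ^ (r * j) *
        ⟪∑ k ∈ range N, ζ ^ (r * k) • u k, ∑ l ∈ range N, ζ ^ (r * l) • v l⟫_ℂ
      = ∑ r ∈ range M, ∑ k ∈ range N, ∑ l ∈ range N,
          (ζ ^ ((l : ℤ) + j - k)) ^ r * ⟪u k, v l⟫_ℂ := by
        refine sum_congr rfl fun r _ => ?_
        rw [sum_inner, mul_sum]
        refine sum_congr rfl fun k _ => ?_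
        rw [inner_smul_left, inner_sum, mul_sum, mul_sum]
        refine sum_congr rfl fun l _ => ?_
        rw [inner_smul_right, ← hcoef]
        ring
    _ = ∑ k ∈ range N, ∑ l ∈ range N,
          (∑ r ∈ range M, (ζ ^ ((l : ℤ) + j - k)) ^ r) * ⟪u k, v l⟫_ℂ := by
        simp only [sum_mul]
        rw [sum_comm]
        exact sum_congr rfl fun k _ => sum_comm
    _ = ∑ l ∈ range N, ∑ k ∈ range N, if k = l + j then M * ⟪u k, v l⟫_ℂ else 0 := by
        rw [sum_comm]
        refine sum_congr rfl fun l hl => sum_congr rfl fun k hk => ?_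
        rw [hζ.sum_zpow_pow_eq_ite, ite_mul, zero_mul]
        exact if_congr (hdvd k hk l hl) rfl rfl
    _ = M * ∑ l ∈ range (N - j), ⟪u (l + j), v l⟫_ℂ := by
        simp only [sum_ite_eq', mem_range, ← sum_filter, mul_sum]
        congr 1
        ext l
        simp only [mem_filter, mem_range]
        omega

section NumericalRadius

variable {E : Type*} [NormedAddCommGroup E] [InnerProductSpace ℂ E]

theorem norm_pow_apply_of_isometry {A : E →L[ℂ] E} (hA : ∀ x, ‖A x‖ = ‖x‖) (k : ℕ) (x : E) :
    ‖(A ^ k) x‖ = ‖x‖ := by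
  induction k with
  | zero => rfl
  | succ k ih => rw [pow_succ', mul_apply_eq_comp, hA, ih]

theorem inner_pow_apply_pow_apply_of_isometry {A : E →L[ℂ] E} (hA : ∀ x, ‖A x‖ = ‖x‖)
    (k : ℕ) (u v : E) : ⟪(A ^ k) u, (A ^ k) v⟫_ℂ = ⟪u, v⟫_ℂ :=
  (LinearMap.norm_map_iff_inner_map_map (A ^ k)).mp (norm_pow_apply_of_isometry hA k) u v

theorem norm_inner_apply_le_norm_apply (T : E →L[ℂ] E) {y : E} (hy : ‖y‖ = 1) :
    ‖⟪T y, y⟫_ℂ‖ ≤ ‖T y‖ := by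
  simpa [hy] using norm_inner_le_norm (T y) y

theorem norm_apply_le_opNorm_of_norm_eq_one (T : E →L[ℂ] E) {y : E} (hy : ‖y‖ = 1) :
    ‖T y‖ ≤ ‖T‖ := by
  simpa [hy] using T.le_opNorm y

theorem norm_inner_le_numRad (T : E →L[ℂ] E) {y : E} (hy : ‖y‖ = 1) :
    ‖⟪T y, y⟫_ℂ‖ ≤ numRad T := by
  refine le_csSup ⟨‖T‖, ?_⟩ ⟨y, hy, rfl⟩
  rintro r ⟨x, hx, rfl⟩
  exact (norm_inner_apply_le_norm_apply T hx).trans (norm_apply_le_opNorm_of_norm_eq_one T hx)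

theorem numRad_le {T : E →L[ℂ] E} {c : ℝ} (hc : 0 ≤ c)
    (h : ∀ y : E, ‖y‖ = 1 → ‖⟪T y, y⟫_ℂ‖ ≤ c) : numRad T ≤ c :=
  Real.sSup_le (fun _ ⟨y, hy, hr⟩ => hr ▸ h y hy) hc

theorem numRad_nonneg (T : E →L[ℂ] E) : 0 ≤ numRad T :=
  Real.sSup_nonneg fun _ ⟨_, _, hr⟩ => hr ▸ norm_nonneg _

theorem norm_inner_le_numRad_mul_sq (T : E →L[ℂ] E) (x : E) :
    ‖⟪T x, x⟫_ℂ‖ ≤ numRad T * ‖x‖ ^ 2 := by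
  rcases eq_or_ne x 0 with rfl | hx
  · simp
  have hx0 : ‖x‖ ≠ 0 := norm_ne_zero_iff.mpr hx
  have hunit : ‖(‖x‖⁻¹ : ℂ) • x‖ = 1 := by
    rw [norm_smul, norm_inv, Complex.norm_real, norm_norm, inv_mul_cancel₀ hx0]
  have := norm_inner_le_numRad T hunit
  rw [map_smul, inner_smul_left, inner_smul_right, norm_mul, norm_mul, Complex.norm_conj,
    norm_inv, Complex.norm_real, norm_norm, ← mul_assoc, ← sq, inv_pow] at this
  rwa [inv_mul_le_iff₀ (by positivity), mul_comm] at this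

theorem nat_mul_norm_inner_apply_le_of_commute_isometry {A B : E →L[ℂ] E} (hAB : Commute A B)
    (hA : ∀ x, ‖A x‖ = ‖x‖) (x : E) (n : ℕ) :
    n * ‖⟪A (B x), x⟫_ℂ‖ ≤ (n + 1) * (numRad B * ‖x‖ ^ 2) := by
  obtain ⟨ζ, hζ⟩ : ∃ ζ : ℂ, IsPrimitiveRoot ζ (n + 2) :=
    ⟨_, Complex.isPrimitiveRoot_exp _ (by omega)⟩
  let z : ℕ → E := fun r => ∑ k ∈ range (n + 1), ζ ^ (r * k) • (A ^ k) x
  have hBz : ∀ r, B (z r) = ∑ k ∈ range (n + 1), ζ ^ (r * k) • (A ^ k) (B x) := fun r => by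
    simp only [z, map_sum, map_smul]
    exact sum_congr rfl fun k _ => by rw [← mul_apply_eq_comp, ← (hAB.pow_left k).eq]; rfl
  have hcross : ∑ r ∈ range (n + 2), ζ ^ (r * 1) * ⟪B (z r), z r⟫_ℂ =
      (n + 2 : ℕ) * (n * ⟪A (B x), x⟫_ℂ) := by
    simp only [hBz]
    rw [hζ.sum_pow_mul_inner_sum_smul (by omega)]
    simp only [Nat.add_sub_cancel, pow_succ, mul_apply_eq_comp,
      inner_pow_apply_pow_apply_of_isometry hA, sum_const, card_range, nsmul_eq_mul]
  have hnorm : ∑ r ∈ range (n + 2), ‖z r‖ ^ 2 = (n + 2 : ℕ) * ((n + 1) * ‖x‖ ^ 2) := by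
    have := hζ.sum_pow_mul_inner_sum_smul (N := n + 1) (j := 0) (by omega)
      (fun k => (A ^ k) x) (fun k => (A ^ k) x)
    simp only [mul_zero, pow_zero, one_mul, Nat.sub_zero, add_zero, inner_self_eq_norm_sq_to_K,
      norm_pow_apply_of_isometry hA, sum_const, card_range, nsmul_eq_mul] at this
    apply Complex.ofReal_injective
    push_cast [z] at this ⊢
    exact this
  have key : ((n + 2 : ℕ) : ℝ) * (n * ‖⟪A (B x), x⟫_ℂ‖) ≤
      (n + 2 : ℕ) * ((n + 1) * (numRad B * ‖x‖ ^ 2)) := calc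
    _ = ‖∑ r ∈ range (n + 2), ζ ^ (r * 1) * ⟪B (z r), z r⟫_ℂ‖ := by
      rw [hcross, norm_mul, norm_mul, Complex.norm_natCast, Complex.norm_natCast]
    _ ≤ ∑ r ∈ range (n + 2), ‖⟪B (z r), z r⟫_ℂ‖ := norm_sum_le_of_le _ fun r _ => by
      rw [norm_mul, norm_pow, hζ.norm'_eq_one (by omega), one_pow, one_mul]
    _ ≤ ∑ r ∈ range (n + 2), numRad B * ‖z r‖ ^ 2 :=
      sum_le_sum fun r _ => norm_inner_le_numRad_mul_sq B (z r)
    _ = _ := by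
      rw [← mul_sum, hnorm]
      ring
  exact le_of_mul_le_mul_left key (by positivity)

theorem numRad_mul_le_of_commute_isometry {A B : E →L[ℂ] E} (hAB : Commute A B)
    (hA : ∀ x, ‖A x‖ = ‖x‖) : numRad (A * B) ≤ numRad B :=
  numRad_le (numRad_nonneg B) fun y hy => by
    simpa [hy] using le_of_forall_nat_mul_le_succ_mul
      (nat_mul_norm_inner_apply_le_of_commute_isometry hAB hA y)

end NumericalRadius

section ABNorm

variable {E : Type*} [NormedAddCommGroup E] [InnerProductSpace ℂ E] {α β : ℝ}

theorem abNorm_nonneg (T : E →L[ℂ] E) : 0 ≤ abNorm α β T :=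
  Real.sSup_nonneg fun _ ⟨_, _, hr⟩ => hr ▸ Real.sqrt_nonneg _

theorem le_abNorm_sq (T : E →L[ℂ] E) {y : E} (hy : ‖y‖ = 1) :
    α * ‖⟪T y, y⟫_ℂ‖ ^ 2 + β * ‖T y‖ ^ 2 ≤ abNorm α β T ^ 2 := by
  suffices √(α * ‖⟪T y, y⟫_ℂ‖ ^ 2 + β * ‖T y‖ ^ 2) ≤ abNorm α β T from
    (Real.sqrt_le_iff.mp this).2
  refine le_csSup ⟨√((|α| + |β|) * ‖T‖ ^ 2), ?_⟩ ⟨y, hy, rfl⟩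
  rintro r ⟨x, hx, rfl⟩
  have hinner := (norm_inner_apply_le_norm_apply T hx).trans
    (norm_apply_le_opNorm_of_norm_eq_one T hx)
  have hTx := norm_apply_le_opNorm_of_norm_eq_one T hx
  refine Real.sqrt_le_sqrt ?_
  calc α * ‖⟪T x, x⟫_ℂ‖ ^ 2 + β * ‖T x‖ ^ 2 ≤ |α| * ‖⟪T x, x⟫_ℂ‖ ^ 2 + |β| * ‖T x‖ ^ 2 := by
        gcongr <;> exact le_abs_self _
    _ ≤ (|α| + |β|) * ‖T‖ ^ 2 := by
        rw [add_mul]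
        gcongr

theorem abNorm_le {T : E →L[ℂ] E} {c : ℝ} (hc : 0 ≤ c)
    (h : ∀ y : E, ‖y‖ = 1 → α * ‖⟪T y, y⟫_ℂ‖ ^ 2 + β * ‖T y‖ ^ 2 ≤ c ^ 2) :
    abNorm α β T ≤ c :=
  Real.sSup_le (fun _ ⟨y, hy, hr⟩ => hr ▸ Real.sqrt_le_iff.mpr ⟨hc, h y hy⟩) hc

theorem add_mul_numRad_sq_le_abNorm_sq (hβ : 0 ≤ β) (T : E →L[ℂ] E) :
    (α + β) * numRad T ^ 2 ≤ abNorm α β T ^ 2 := by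
  rcases le_or_gt (α + β) 0 with hαβ | hαβ
  · exact (mul_nonpos_of_nonpos_of_nonneg hαβ (sq_nonneg _)).trans (sq_nonneg _)
  have hsqrt : 0 < √(α + β) := Real.sqrt_pos.mpr hαβ
  suffices numRad T ≤ abNorm α β T / √(α + β) by
    calc (α + β) * numRad T ^ 2 ≤ (α + β) * (abNorm α β T / √(α + β)) ^ 2 := by
          gcongr
          exact numRad_nonneg T
      _ = abNorm α β T ^ 2 := by
          rw [div_pow, Real.sq_sqrt hαβ.le]
          field_simp
  refine numRad_le (div_nonneg (abNorm_nonneg T) hsqrt.le) fun y hy => ?_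
  rw [le_div_iff₀ hsqrt]
  refine le_of_pow_le_pow_left₀ two_ne_zero (abNorm_nonneg T) ?_
  have hinner := norm_inner_apply_le_norm_apply T hy
  calc (‖⟪T y, y⟫_ℂ‖ * √(α + β)) ^ 2 = α * ‖⟪T y, y⟫_ℂ‖ ^ 2 + β * ‖⟪T y, y⟫_ℂ‖ ^ 2 := by
        rw [mul_pow, Real.sq_sqrt hαβ.le]
        ring
    _ ≤ α * ‖⟪T y, y⟫_ℂ‖ ^ 2 + β * ‖T y‖ ^ 2 := by gcongr
    _ ≤ abNorm α β T ^ 2 := le_abNorm_sq T hy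

end ABNorm

theorem abNorm_mul_le_of_comm_isometry_general (A B : H →L[ℂ] H) (hAB : A * B = B * A)
    (hA : ∀ x : H, ‖A x‖ = ‖x‖) (α β : ℝ) (hα : 0 ≤ α) (hβ : 0 ≤ β) :
    abNorm α β (A * B) ≤ Real.sqrt (α / (α + β) + 1) * abNorm α β B := by
  set S := abNorm α β B
  have hα_numRad : α * numRad B ^ 2 ≤ α / (α + β) * S ^ 2 := calc
    α * numRad B ^ 2 = α / (α + β) * ((α + β) * numRad B ^ 2) := by
      rw [← mul_assoc, div_mul_cancel_of_imp fun h => by linarith]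
    _ ≤ α / (α + β) * S ^ 2 := by
      gcongr
      exact add_mul_numRad_sq_le_abNorm_sq hβ B
  refine abNorm_le (mul_nonneg (Real.sqrt_nonneg _) (abNorm_nonneg B)) fun y hy => ?_
  have hinner : ‖⟪(A * B) y, y⟫_ℂ‖ ≤ numRad B :=
    (norm_inner_le_numRad _ hy).trans (numRad_mul_le_of_commute_isometry hAB hA)
  have hBy : β * ‖B y‖ ^ 2 ≤ S ^ 2 :=
    le_of_add_le_of_nonneg_right (le_abNorm_sq B hy) (by positivity)
  calc α * ‖⟪(A * B) y, y⟫_ℂ‖ ^ 2 + β * ‖(A * B) y‖ ^ 2 ≤ α * numRad B ^ 2 + β * ‖B y‖ ^ 2 := by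
        rw [mul_apply_eq_comp, hA]
        gcongr
        exact hinner
    _ ≤ α / (α + β) * S ^ 2 + S ^ 2 := add_le_add hα_numRad hBy
    _ = (Real.sqrt (α / (α + β) + 1) * S) ^ 2 := by
        rw [mul_pow, Real.sq_sqrt (by positivity)]
        ring

/-- Bound for the `(α,β)`-norm of `AB` when `A` is an isometry commuting with `B`. -/
theorem abNorm_mul_le_of_comm_isometry (A B : H →L[ℂ] H) (hAB : A * B = B * A)
    (hA : ∀ x : H, ‖A x‖ = ‖x‖) (α β : ℝ) (hα : 0 ≤ α) (hβ : 0 ≤ β)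
    (hαβ : (α, β) ≠ (0, 0)) :
    abNorm α β (A * B) ≤ Real.sqrt (α / (α + β) + 1) * abNorm α β B :=
  abNorm_mul_le_of_comm_isometry_general A B hAB hA α β hα hβ
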